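/- arXiv:cs/0408007 — 4 statements merged into one kernel-verified Lean document; each statement's English description precedes it below -/
import Mathlib

section
/- Let S ⊆ ℝ^d be a closed convex set containing 0 with S ⊆ R·𝔹, and let c_1,…,c_n : S → ℝ be convex differentiable functions. Let x_1 = 0 and x_{t+1} = P_S(x_t − η g_t), where P_S is Euclidean projection onto S, η = R/(G√n), and g_1,…,g_n are random vectors with E[g_t | x_t] = ∇c_t(x_t) and ‖g_t‖ ≤ G almost surely. Then E[Σ_{t=1}^n c_t(x_t)] − min_{x ∈ S} Σ_{t=1}^n c_t(x) ≤ R·G·√n. -/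
open MeasureTheory

lemma grad_ineq {d : ℕ} {S : Set (EuclideanSpace ℝ (Fin d))} {c : EuclideanSpace ℝ (Fin d) → ℝ}
    (hc : ConvexOn ℝ S c) (hd : Differentiable ℝ c) {a z : EuclideanSpace ℝ (Fin d)}
    (ha : a ∈ S) (hz : z ∈ S) :
    c a - c z ≤ inner ℝ (gradient c a) (a - z) := by
  set A : ℝ →ᵃ[ℝ] EuclideanSpace ℝ (Fin d) := AffineMap.lineMap a z with hA
  have hA0 : A 0 = a := AffineMap.lineMap_apply_zero a z
  have hA1 : A 1 = z := AffineMap.lineMap_apply_one a z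
  have hφc : ConvexOn ℝ (A ⁻¹' S) (c ∘ A) := hc.comp_affineMap A
  have hLd : HasDerivAt (fun s : ℝ => A s) (z - a) 0 := by
    have : HasDerivAt (fun s : ℝ => s • (z - a) + a) ((1:ℝ) • (z - a)) 0 :=
      ((hasDerivAt_id (0:ℝ)).smul_const (z - a)).add_const a
    simp only [one_smul] at this
    have heq : (fun s : ℝ => A s) = fun s : ℝ => s • (z - a) + a :=
      funext fun s => by simp [hA, AffineMap.lineMap_apply, vsub_eq_sub, vadd_eq_add]
    rw [heq]; exact this
  have hgrad : HasGradientAt c (gradient c a) a := (hd a).hasGradientAt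
  have hfd : HasFDerivAt c (InnerProductSpace.toDual ℝ _ (gradient c a)) a :=
    hgrad.hasFDerivAt
  have hφd : HasDerivAt (c ∘ A) (inner ℝ (gradient c a) (z - a) : ℝ) 0 := by
    have hfd' : HasFDerivAt c (InnerProductSpace.toDual ℝ _ (gradient c a)) (A 0) := hA0 ▸ hfd
    have := hfd'.comp_hasDerivAt (0:ℝ) hLd
    simpa [Function.comp, InnerProductSpace.toDual_apply_apply] using this
  have h01 : (0:ℝ) ∈ A ⁻¹' S := by simp [Set.mem_preimage, hA0, ha]
  have h11 : (1:ℝ) ∈ A ⁻¹' S := by simp [Set.mem_preimage, hA1, hz]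
  have := hφc.le_slope_of_hasDerivAt h01 h11 zero_lt_one hφd
  rw [slope_def_field] at this
  simp only [Function.comp, hA0, hA1] at this
  have h2 : (inner ℝ (gradient c a) (z - a) : ℝ) ≤ c z - c a := by
    simpa [div_one] using this
  have h3 : (inner ℝ (gradient c a) (a - z) : ℝ) = - inner ℝ (gradient c a) (z - a) := by
    rw [← inner_neg_right, neg_sub]
  linarith

lemma proj_contract {d : ℕ} {S : Set (EuclideanSpace ℝ (Fin d))} (hS : Convex ℝ S)
    {P : EuclideanSpace ℝ (Fin d) → EuclideanSpace ℝ (Fin d)}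
    (hP : ∀ y, P y ∈ S ∧ ∀ w ∈ S, dist y (P y) ≤ dist y w)
    {y w : EuclideanSpace ℝ (Fin d)} (hw : w ∈ S) :
    ‖P y - w‖ ≤ ‖y - w‖ := by
  have hinf : ‖y - P y‖ = ⨅ v : S, ‖y - (v:EuclideanSpace ℝ (Fin d))‖ := by
    have : Nonempty S := ⟨⟨P y, (hP y).1⟩⟩
    apply le_antisymm
    · apply le_ciInf; intro v
      simpa [dist_eq_norm] using (hP y).2 v v.2
    · exact ciInf_le ⟨0, fun b ⟨v, hv⟩ => hv ▸ norm_nonneg _⟩ (⟨P y, (hP y).1⟩ : S)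
  have hkey : ∀ v ∈ S, (inner ℝ (y - P y) (v - P y) : ℝ) ≤ 0 :=
    (norm_eq_iInf_iff_real_inner_le_zero hS (hP y).1).1 hinf
  have h1 : (inner ℝ (y - P y) (w - P y) : ℝ) ≤ 0 := hkey w hw
  have h2 : ‖y - w‖ ^ 2 = ‖y - P y‖ ^ 2 - 2 * inner ℝ (y - P y) (w - P y) + ‖w - P y‖ ^ 2 := by
    have := norm_sub_sq_real (y - P y) (w - P y)
    convert this using 2
    abel
  have h3 : ‖P y - w‖ = ‖w - P y‖ := norm_sub_rev _ _
  nlinarith [norm_nonneg (y - P y), norm_nonneg (w - P y), norm_nonneg (y - w), norm_nonneg (P y - w)]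

/-- Online gradient descent with unbiased stochastic gradient estimates:
with `x_1 = 0`, `x_{t+1} = P_S(x_t - η g_t)`, `η = R/(G√n)`, `E[g_t | x_t] = ∇c_t(x_t)`
and `‖g_t‖ ≤ G` a.s., the expected regret is at most `R G √n`. -/
theorem stmt_4 {d : ℕ} {Ω : Type*} [MeasurableSpace Ω] (μ : Measure Ω)
    [IsProbabilityMeasure μ]
    (S : Set (EuclideanSpace ℝ (Fin d))) (hS : Convex ℝ S) (hcl : IsClosed S)
    (h0 : (0 : EuclideanSpace ℝ (Fin d)) ∈ S)
    (R G : ℝ) (hR : 0 < R) (hG : 0 < G)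
    (hSR : S ⊆ Metric.closedBall (0 : EuclideanSpace ℝ (Fin d)) R)
    (n : ℕ) (hn : 0 < n)
    (c : ℕ → EuclideanSpace ℝ (Fin d) → ℝ)
    (hconv : ∀ t, ConvexOn ℝ S (c t)) (hdiff : ∀ t, Differentiable ℝ (c t))
    (g x : ℕ → Ω → EuclideanSpace ℝ (Fin d))
    (hgm : ∀ t, Measurable (g t)) (hxm : ∀ t, Measurable (x t))
    (hgi : ∀ t, Integrable (g t) μ)
    (P : EuclideanSpace ℝ (Fin d) → EuclideanSpace ℝ (Fin d))
    (hP : ∀ z, P z ∈ S ∧ ∀ w ∈ S, dist z (P z) ≤ dist z w)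
    (hx0 : ∀ ω, x 0 ω = 0)
    (hxrec : ∀ t ω, x (t + 1) ω = P (x t ω - (R / (G * Real.sqrt n)) • g t ω))
    (hbound : ∀ t, ∀ᵐ ω ∂μ, ‖g t ω‖ ≤ G)
    (hcond : ∀ t,
      μ[g t | MeasurableSpace.comap (x t) (by infer_instance)] =ᵐ[μ]
        fun ω => gradient (c t) (x t ω)) :
    ∀ z ∈ S,
      (∫ ω, ∑ t ∈ Finset.range n, c t (x t ω) ∂μ) - ∑ t ∈ Finset.range n, c t z ≤
        R * G * Real.sqrt n := by
  intro z hz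
  set η := R / (G * Real.sqrt n) with hηdef
  set s := Real.sqrt n with hsdef
  have hs : 0 < s := Real.sqrt_pos.mpr (by exact_mod_cast hn)
  have hηpos : 0 < η := div_pos hR (mul_pos hG hs)
  have hns : (n : ℝ) = s ^ 2 := (Real.sq_sqrt (Nat.cast_nonneg n)).symm
  have hηs : η * (G * s) = R := by
    rw [hηdef]; field_simp
  -- iterates stay in S
  have hxS : ∀ t ω, x t ω ∈ S := by
    intro t
    induction t with
    | zero => intro ω; rw [hx0 ω]; exact h0
    | succ t _ => intro ω; rw [hxrec t ω]; exact (hP _).1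
  have hxnorm : ∀ t ω, ‖x t ω‖ ≤ R := fun t ω => by
    simpa [mem_closedBall_zero_iff] using hSR (hxS t ω)
  have hznorm : ‖z‖ ≤ R := by simpa [mem_closedBall_zero_iff] using hSR hz
  have hfb : ∀ t ω, ‖x t ω - z‖ ≤ 2 * R := fun t ω =>
    (norm_sub_le _ _).trans (by linarith [hxnorm t ω])
  -- pathwise regret bound on inner products
  have key : ∀ᵐ ω ∂μ, ∑ t ∈ Finset.range n, (inner ℝ (g t ω) (x t ω - z) : ℝ) ≤ R * G * s := by
    filter_upwards [ae_all_iff.2 hbound] with ω hω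
    set f : ℕ → ℝ := fun t => ‖x t ω - z‖ ^ 2 with hf
    have hstep : ∀ t, 2 * η * (inner ℝ (g t ω) (x t ω - z) : ℝ) ≤
        f t - f (t + 1) + η ^ 2 * G ^ 2 := by
      intro t
      have h1 : ‖x (t + 1) ω - z‖ ≤ ‖x t ω - η • g t ω - z‖ := by
        rw [hxrec t ω]; exact proj_contract hS hP hz
      have h2 : ‖x t ω - η • g t ω - z‖ ^ 2 =
          f t - 2 * η * (inner ℝ (g t ω) (x t ω - z) : ℝ) + η ^ 2 * ‖g t ω‖ ^ 2 := by
        have he : x t ω - η • g t ω - z = (x t ω - z) - η • g t ω := by abel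
        rw [he, norm_sub_sq_real, real_inner_smul_right, norm_smul, real_inner_comm]
        simp [hf, abs_of_pos hηpos]
        ring
      have hgle : ‖g t ω‖ ≤ G := hω t
      have h1' : ‖x (t+1) ω - z‖ ^ 2 ≤ ‖x t ω - η • g t ω - z‖ ^ 2 := by
        have := norm_nonneg (x (t+1) ω - z)
        nlinarith [norm_nonneg (x t ω - η • g t ω - z)]
      have hg2 : ‖g t ω‖ ^ 2 ≤ G ^ 2 := by nlinarith [norm_nonneg (g t ω)]
      have hft : f (t + 1) = ‖x (t + 1) ω - z‖ ^ 2 := rfl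
      have : f (t + 1) ≤ f t - 2 * η * (inner ℝ (g t ω) (x t ω - z) : ℝ) + η ^ 2 * G ^ 2 := by
        rw [hft]
        rw [h2] at h1'
        nlinarith [sq_nonneg η]
      linarith
    have hsum : 2 * η * ∑ t ∈ Finset.range n, (inner ℝ (g t ω) (x t ω - z) : ℝ) ≤
        f 0 - f n + n * (η ^ 2 * G ^ 2) := by
      rw [Finset.mul_sum]
      calc ∑ t ∈ Finset.range n, 2 * η * (inner ℝ (g t ω) (x t ω - z) : ℝ)
          ≤ ∑ t ∈ Finset.range n, (f t - f (t + 1) + η ^ 2 * G ^ 2) :=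
            Finset.sum_le_sum fun t _ => hstep t
        _ = (f 0 - f n) + n * (η ^ 2 * G ^ 2) := by
            rw [Finset.sum_add_distrib, Finset.sum_range_sub' f n]
            simp [Finset.card_range]
    have hf0 : f 0 ≤ R ^ 2 := by
      have : f 0 = ‖z‖ ^ 2 := by simp [hf, hx0 ω, norm_sub_rev]
      rw [this]; nlinarith [norm_nonneg z]
    have hfn : 0 ≤ f n := sq_nonneg _
    have hRsq : R ^ 2 + (n : ℝ) * (η ^ 2 * G ^ 2) = 2 * η * (R * G * s) := by
      have hRe : R = η * (G * s) := hηs.symm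
      rw [hns, hRe]; ring
    have h2η : (0:ℝ) < 2 * η := by linarith
    have hfin : 2 * η * ∑ t ∈ Finset.range n, (inner ℝ (g t ω) (x t ω - z) : ℝ)
        ≤ 2 * η * (R * G * s) := by
      rw [← hRsq]; linarith
    exact le_of_mul_le_mul_left hfin h2η
  -- measurability/integrability of the inner product terms
  have hinner_meas : ∀ t, Measurable (fun ω => (inner ℝ (g t ω) (x t ω - z) : ℝ)) := by
    intro t
    exact continuous_inner.measurable.comp ((hgm t).prodMk ((hxm t).sub measurable_const))
  have hinner_int : ∀ t, Integrable (fun ω => (inner ℝ (g t ω) (x t ω - z) : ℝ)) μ := by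
    intro t
    refine Integrable.mono' (integrable_const (G * (2 * R)))
      (hinner_meas t).aestronglyMeasurable ?_
    filter_upwards [hbound t] with ω hω
    calc ‖(inner ℝ (g t ω) (x t ω - z) : ℝ)‖ ≤ ‖g t ω‖ * ‖x t ω - z‖ := norm_inner_le_norm _ _
      _ ≤ G * (2 * R) := by
          apply mul_le_mul hω (hfb t ω) (norm_nonneg _) hG.le
  -- the conditional expectation swap
  have hcoord : ∀ v : EuclideanSpace ℝ (Fin d), ∀ i : Fin d, |v i| ≤ ‖v‖ := by
    intro v i
    rw [EuclideanSpace.norm_eq, ← Real.sqrt_sq_eq_abs]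
    apply Real.sqrt_le_sqrt
    simpa [sq_abs] using Finset.single_le_sum (f := fun j => ‖v j‖ ^ 2)
      (fun j _ => sq_nonneg _) (Finset.mem_univ i)
  have hswap : ∀ t, (∫ ω, (inner ℝ (g t ω) (x t ω - z) : ℝ) ∂μ)
      = ∫ ω, (inner ℝ (gradient (c t) (x t ω)) (x t ω - z) : ℝ) ∂μ := by
    intro t
    have hm : MeasurableSpace.comap (x t) (by infer_instance) ≤ _ := (hxm t).comap_le
    have hq := hcond t
    have hq_int : Integrable (fun ω => gradient (c t) (x t ω)) μ :=
      integrable_condExp.congr hq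
    have hxtm : Measurable[MeasurableSpace.comap (x t) (by infer_instance)] (x t) :=
      measurable_iff_comap_le.mpr le_rfl
    -- coordinate-wise pull-out
    have hGi_int : ∀ i : Fin d, Integrable (fun ω => g t ω i) μ := fun i =>
      (EuclideanSpace.proj (𝕜 := ℝ) i).integrable_comp (hgi t)
    have hqi_int : ∀ i : Fin d, Integrable (fun ω => gradient (c t) (x t ω) i) μ := fun i =>
      (EuclideanSpace.proj (𝕜 := ℝ) i).integrable_comp hq_int
    have hfi_sm : ∀ i : Fin d,
        StronglyMeasurable[MeasurableSpace.comap (x t) (by infer_instance)]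
          (fun ω => x t ω i - z i) := by
      intro i
      exact (((EuclideanSpace.proj (𝕜 := ℝ) i).continuous.measurable.comp hxtm).sub
        measurable_const).stronglyMeasurable
    have hfi_bdd : ∀ i : Fin d, ∀ ω, |x t ω i - z i| ≤ 2 * R := by
      intro i ω
      have h1 : |(x t ω - z) i| ≤ ‖x t ω - z‖ := hcoord _ i
      have h2 : (x t ω - z) i = x t ω i - z i := rfl
      rw [h2] at h1
      exact h1.trans (hfb t ω)
    have hprod_int : ∀ i : Fin d, Integrable
        (fun ω => (x t ω i - z i) * g t ω i) μ := by
      intro i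
      exact Integrable.bdd_mul (hGi_int i)
        ((((EuclideanSpace.proj (𝕜 := ℝ) i).continuous.measurable.comp (hxm t)).sub measurable_const).aestronglyMeasurable)
        (Filter.Eventually.of_forall fun ω => by
          simpa [Real.norm_eq_abs] using hfi_bdd i ω)
    have hqprod_int : ∀ i : Fin d, Integrable
        (fun ω => (x t ω i - z i) * gradient (c t) (x t ω) i) μ := by
      intro i
      exact Integrable.bdd_mul (hqi_int i)
        ((((EuclideanSpace.proj (𝕜 := ℝ) i).continuous.measurable.comp (hxm t)).sub measurable_const).aestronglyMeasurable)
        (Filter.Eventually.of_forall fun ω => by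
          simpa [Real.norm_eq_abs] using hfi_bdd i ω)
    have hqcond : ∀ i : Fin d, (fun ω => gradient (c t) (x t ω) i) =ᵐ[μ]
        μ[(fun ω => g t ω i)|MeasurableSpace.comap (x t) (by infer_instance)] := by
      intro i
      refine ae_eq_condExp_of_forall_setIntegral_eq hm (hGi_int i)
        (fun s _ _ => (hqi_int i).integrableOn) (fun s hs hμs => ?_) ?_
      · have hs0 : MeasurableSet s := hm s hs
        have e1 : ∫ ω in s, gradient (c t) (x t ω) i ∂μ
            = ∫ ω in s, (μ[g t|MeasurableSpace.comap (x t) (by infer_instance)]) ω i ∂μ := by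
          refine integral_congr_ae (ae_restrict_of_ae (hq.mono fun ω hω => ?_))
          exact congrArg (fun v => v i) hω.symm
        have e2 : ∫ ω in s, (μ[g t|MeasurableSpace.comap (x t) (by infer_instance)]) ω i ∂μ
            = (EuclideanSpace.proj (𝕜 := ℝ) i)
                (∫ ω in s, (μ[g t|MeasurableSpace.comap (x t) (by infer_instance)]) ω ∂μ) :=
          (EuclideanSpace.proj (𝕜 := ℝ) i).integral_comp_comm
            integrable_condExp.integrableOn
        have e3 : ∫ ω in s, (μ[g t|MeasurableSpace.comap (x t) (by infer_instance)]) ω ∂μ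
            = ∫ ω in s, g t ω ∂μ := setIntegral_condExp hm (hgi t) hs
        have e4 : (EuclideanSpace.proj (𝕜 := ℝ) i) (∫ ω in s, g t ω ∂μ)
            = ∫ ω in s, g t ω i ∂μ :=
          ((EuclideanSpace.proj (𝕜 := ℝ) i).integral_comp_comm (hgi t).integrableOn).symm
        rw [e1, e2, e3, e4]
      · have ha1 : AEStronglyMeasurable[MeasurableSpace.comap (x t) (by infer_instance)]
            (μ[g t|MeasurableSpace.comap (x t) (by infer_instance)]) μ :=
          stronglyMeasurable_condExp.aestronglyMeasurable
        have ha2 := Continuous.comp_aestronglyMeasurable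
          (EuclideanSpace.proj (𝕜 := ℝ) i).continuous ha1
        refine AEStronglyMeasurable.congr ha2 ?_
        refine hq.mono fun ω hω => ?_
        simp only [Function.comp_apply, hω]
        rfl
    have hpull : ∀ i : Fin d,
        ∫ ω, (x t ω i - z i) * g t ω i ∂μ
          = ∫ ω, (x t ω i - z i) * gradient (c t) (x t ω) i ∂μ := by
      intro i
      have hprod_int' : Integrable ((fun ω => x t ω i - z i) * fun ω => g t ω i) μ :=
        hprod_int i
      have hmul := condExp_mul_of_stronglyMeasurable_left (μ := μ) (hfi_sm i) hprod_int' (hGi_int i)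
      calc ∫ ω, (x t ω i - z i) * g t ω i ∂μ
          = ∫ ω, ((fun ω => x t ω i - z i) * fun ω => g t ω i) ω ∂μ := rfl
        _ = ∫ ω, (μ[(fun ω => x t ω i - z i) * fun ω => g t ω i|
              MeasurableSpace.comap (x t) (by infer_instance)]) ω ∂μ :=
            (integral_condExp hm).symm
        _ = ∫ ω, ((fun ω => x t ω i - z i) *
              μ[(fun ω => g t ω i)|MeasurableSpace.comap (x t) (by infer_instance)]) ω ∂μ :=
            integral_congr_ae hmul
        _ = ∫ ω, (x t ω i - z i) * gradient (c t) (x t ω) i ∂μ := by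
            refine integral_congr_ae ((hqcond i).mono fun ω hω => ?_)
            exact congrArg (fun r => (x t ω i - z i) * r) hω.symm
    have hsum1 : (∫ ω, (inner ℝ (g t ω) (x t ω - z) : ℝ) ∂μ)
        = ∑ i : Fin d, ∫ ω, (x t ω i - z i) * g t ω i ∂μ := by
      rw [← integral_finset_sum _ fun i _ => hprod_int i]
      refine integral_congr_ae (Filter.Eventually.of_forall fun ω => ?_)
      simp only [PiLp.inner_apply, RCLike.inner_apply, conj_trivial]
      exact Finset.sum_congr rfl fun i _ => by simp
    have hsum2 : (∫ ω, (inner ℝ (gradient (c t) (x t ω)) (x t ω - z) : ℝ) ∂μ)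
        = ∑ i : Fin d, ∫ ω, (x t ω i - z i) * gradient (c t) (x t ω) i ∂μ := by
      rw [← integral_finset_sum _ fun i _ => hqprod_int i]
      refine integral_congr_ae (Filter.Eventually.of_forall fun ω => ?_)
      simp only [PiLp.inner_apply, RCLike.inner_apply, conj_trivial]
      exact Finset.sum_congr rfl fun i _ => by simp
    rw [hsum1, hsum2]
    exact Finset.sum_congr rfl fun i _ => hpull i
  -- integrability of c t ∘ x t
  have hcint : ∀ t, Integrable (fun ω => c t (x t ω)) μ := by
    intro t
    obtain ⟨C, hC⟩ : ∃ C, ∀ y ∈ S, ‖c t y‖ ≤ C :=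
      (Metric.isCompact_of_isClosed_isBounded hcl
        (Metric.isBounded_closedBall.subset hSR)).exists_bound_of_continuousOn
        (hdiff t).continuous.continuousOn
    refine Integrable.mono' (integrable_const C)
      ((hdiff t).continuous.measurable.comp (hxm t)).aestronglyMeasurable ?_
    exact Filter.Eventually.of_forall fun ω => hC _ (hxS t ω)
  -- integrability of inner ℝ (gradient ...) terms
  have hqint : ∀ t, Integrable (fun ω => (inner ℝ (gradient (c t) (x t ω)) (x t ω - z) : ℝ)) μ := by
    intro t
    have hm : MeasurableSpace.comap (x t) (by infer_instance) ≤ _ := (hxm t).comap_le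
    have hq_int : Integrable (fun ω => gradient (c t) (x t ω)) μ :=
      integrable_condExp.congr (hcond t)
    refine Integrable.mono' (g := fun ω => ‖gradient (c t) (x t ω)‖ * (2 * R))
      (hq_int.norm.mul_const _) ?_ ?_
    · exact hq_int.aestronglyMeasurable.inner
        ((hxm t).sub measurable_const).aestronglyMeasurable
    · exact Filter.Eventually.of_forall fun ω => (norm_inner_le_norm _ _).trans
        (mul_le_mul_of_nonneg_left (hfb t ω) (norm_nonneg _))
  -- put everything together
  have h1 : (∫ ω, ∑ t ∈ Finset.range n, c t (x t ω) ∂μ)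
      = ∑ t ∈ Finset.range n, ∫ ω, c t (x t ω) ∂μ :=
    integral_finset_sum _ fun t _ => hcint t
  have h2 : ∀ t, (∫ ω, c t (x t ω) ∂μ) - c t z
      ≤ ∫ ω, (inner ℝ (g t ω) (x t ω - z) : ℝ) ∂μ := by
    intro t
    rw [hswap t]
    have : (∫ ω, c t (x t ω) ∂μ) - c t z = ∫ ω, (c t (x t ω) - c t z) ∂μ := by
      rw [integral_sub (hcint t) (integrable_const _), integral_const]
      simp
    rw [this]
    exact integral_mono ((hcint t).sub (integrable_const _)) (hqint t)
      fun ω => grad_ineq (hconv t) (hdiff t) (hxS t ω) hz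
  have h3 : ∑ t ∈ Finset.range n, ∫ ω, (inner ℝ (g t ω) (x t ω - z) : ℝ) ∂μ
      ≤ R * G * s := by
    rw [← integral_finset_sum _ fun t _ => hinner_int t]
    calc (∫ ω, ∑ t ∈ Finset.range n, (inner ℝ (g t ω) (x t ω - z) : ℝ) ∂μ)
        ≤ ∫ _ω, R * G * s ∂μ := by
          refine integral_mono_ae (integrable_finset_sum _ fun t _ => hinner_int t)
            (integrable_const _) key
      _ = R * G * s := by simp
  calc (∫ ω, ∑ t ∈ Finset.range n, c t (x t ω) ∂μ) - ∑ t ∈ Finset.range n, c t z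
      = ∑ t ∈ Finset.range n, ((∫ ω, c t (x t ω) ∂μ) - c t z) := by
        rw [h1, Finset.sum_sub_distrib]
    _ ≤ ∑ t ∈ Finset.range n, ∫ ω, (inner ℝ (g t ω) (x t ω - z) : ℝ) ∂μ :=
        Finset.sum_le_sum fun t _ => h2 t
    _ ≤ R * G * s := h3
end

section
/- Let S ⊆ ℝ^d be convex with r𝔹 ⊆ S ⊆ R𝔹, let c : S → [−C,C] be convex, 0 < α < 1, 0 < δ ≤ αr, and define ĉ(x) = E_{v ∈ 𝔹}[c(x + δv)] for x ∈ (1−α)S (well-defined since x + δv ∈ S). Then for all x ∈ (1−α)S, |ĉ(x) − c(x)| ≤ δ · 2C/(αr). -/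
open Pointwise MeasureTheory

/-- One-point Lipschitz estimate at the center of a ball for a bounded convex function. -/
lemma pt_lip {E : Type*} [NormedAddCommGroup E] [NormedSpace ℝ E] {f : E → ℝ} {x : E} {ρ C : ℝ}
    (hρ : 0 < ρ) (hf : ConvexOn ℝ (Metric.closedBall x ρ) f)
    (hC : ∀ z ∈ Metric.closedBall x ρ, |f z| ≤ C)
    {z : E} (hz : z ∈ Metric.closedBall x ρ) :
    |f z - f x| ≤ 2 * C / ρ * ‖z - x‖ := by
  have hx : x ∈ Metric.closedBall x ρ := Metric.mem_closedBall_self hρ.le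
  have hC0 : 0 ≤ C := (abs_nonneg _).trans (hC x hx)
  rcases eq_or_ne z x with rfl | hne
  · simp
  have hn : 0 < ‖z - x‖ := by
    rw [norm_sub_pos_iff]; exact hne
  set n : ℝ := ‖z - x‖ with hndef
  have hnρ : n ≤ ρ := by
    rw [Metric.mem_closedBall, dist_eq_norm] at hz; exact hz
  set w : E := x + (ρ / n) • (z - x) with hw
  set w' : E := x - (ρ / n) • (z - x) with hw'
  have hnorm : ‖(ρ / n) • (z - x)‖ = ρ := by
    rw [norm_smul, Real.norm_of_nonneg (by positivity)]
    field_simp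
    exact hndef.symm
  have hwmem : w ∈ Metric.closedBall x ρ := by
    rw [Metric.mem_closedBall, dist_eq_norm, hw, add_sub_cancel_left, hnorm]
  have hw'mem : w' ∈ Metric.closedBall x ρ := by
    rw [Metric.mem_closedBall, dist_eq_norm, hw', sub_sub_cancel_left, norm_neg, hnorm]
  have hBx := hC x hx
  have hBz := hC z hz
  have hBw := hC w hwmem
  have hBw' := hC w' hw'mem
  -- upper bound
  have combo1 : z = (1 - n / ρ) • x + (n / ρ) • w := by
    have h1 : (n / ρ) • ((ρ / n) • (z - x)) = z - x := by
      rw [smul_smul]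
      have : n / ρ * (ρ / n) = 1 := by field_simp
      rw [this, one_smul]
    rw [hw, smul_add, h1]
    module
  have key1 := hf.2 hx hwmem
    (show (0:ℝ) ≤ 1 - n / ρ by
      have : n / ρ ≤ 1 := (div_le_one hρ).2 hnρ
      linarith)
    (show (0:ℝ) ≤ n / ρ by positivity)
    (show (1 - n / ρ) + (n / ρ) = 1 by ring)
  rw [← combo1] at key1
  -- lower bound
  have hρn : 0 < ρ + n := by linarith
  set t2 : ℝ := n / (ρ + n) with ht2
  have ht2pos : 0 < t2 := by positivity
  have ht2le : t2 ≤ n / ρ := by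
    apply div_le_div_of_nonneg_left hn.le hρ
    linarith
  have hs : 1 - t2 = t2 * (ρ / n) := by
    rw [ht2]; field_simp; ring
  have combo2 : x = (1 - t2) • z + t2 • w' := by
    rw [hw', smul_sub, smul_smul, ← hs]
    module
  have key2 := hf.2 hz hw'mem
    (show (0:ℝ) ≤ 1 - t2 by
      have : t2 ≤ 1 := by
        rw [ht2, div_le_one hρn]; linarith
      linarith)
    (show (0:ℝ) ≤ t2 from ht2pos.le)
    (show (1 - t2) + t2 = 1 by ring)
  rw [← combo2] at key2
  simp only [smul_eq_mul] at key1 key2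
  -- finish
  rw [abs_le] at hBx hBz hBw hBw'
  rw [abs_sub_le_iff]
  constructor
  · have h1 : f z - f x ≤ (n / ρ) * (f w - f x) := by nlinarith
    have h2 : (n / ρ) * (f w - f x) ≤ (n / ρ) * (2 * C) := by
      apply mul_le_mul_of_nonneg_left _ (by positivity)
      linarith [hBw.2, hBx.1]
    calc f z - f x ≤ (n / ρ) * (2 * C) := h1.trans h2
      _ = 2 * C / ρ * n := by ring
  · have h1 : f x - f z ≤ t2 * (f w' - f z) := by nlinarith
    have h2 : t2 * (f w' - f z) ≤ t2 * (2 * C) := by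
      apply mul_le_mul_of_nonneg_left _ ht2pos.le
      linarith [hBw'.2, hBz.1]
    have h3 : t2 * (2 * C) ≤ (n / ρ) * (2 * C) := by
      apply mul_le_mul_of_nonneg_right ht2le (by positivity)
    calc f x - f z ≤ (n / ρ) * (2 * C) := (h1.trans h2).trans h3
      _ = 2 * C / ρ * n := by ring

/-- The `δ`-smoothing `ĉ(x) = E_{v∈𝔹}[c(x+δv)]` of a bounded convex function is
pointwise `δ·2C/(αr)`-close to `c` on the shrunken set `(1-α)S`. -/
theorem stmt_9 {d : ℕ} (hd : 0 < d) (S : Set (EuclideanSpace ℝ (Fin d))) (hS : Convex ℝ S)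
    (r R : ℝ) (hr : 0 < r)
    (hball : Metric.closedBall (0 : EuclideanSpace ℝ (Fin d)) r ⊆ S)
    (hSR : S ⊆ Metric.closedBall (0 : EuclideanSpace ℝ (Fin d)) R)
    (C : ℝ) (c : EuclideanSpace ℝ (Fin d) → ℝ) (hc : ConvexOn ℝ S c)
    (hbdd : ∀ z ∈ S, |c z| ≤ C)
    (α : ℝ) (hα : 0 < α) (hα1 : α < 1)
    (δ : ℝ) (hδ : 0 < δ) (hδα : δ ≤ α * r) :
    ∀ x ∈ (1 - α) • S,
      |(⨍ v in Metric.closedBall (0 : EuclideanSpace ℝ (Fin d)) 1, c (x + δ • v)) - c x| ≤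
        δ * (2 * C / (α * r)) := by
  intro x hx
  have h0S : (0 : EuclideanSpace ℝ (Fin d)) ∈ S := hball (Metric.mem_closedBall_self hr.le)
  have hC0 : 0 ≤ C := (abs_nonneg _).trans (hbdd 0 h0S)
  have hαr : 0 < α * r := by positivity
  -- the ball of radius αr around x lies in S
  have hmem : ∀ w : EuclideanSpace ℝ (Fin d), ‖w - x‖ ≤ α * r → w ∈ S := by
    intro w hw
    obtain ⟨y, hy, rfl⟩ := hx
    set p : EuclideanSpace ℝ (Fin d) := α⁻¹ • (w - (1 - α) • y) with hp
    have hpn : ‖p‖ ≤ r := by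
      rw [hp, norm_smul, Real.norm_of_nonneg (by positivity)]
      calc α⁻¹ * ‖w - (1 - α) • y‖ ≤ α⁻¹ * (α * r) := by
            apply mul_le_mul_of_nonneg_left hw (by positivity)
        _ = r := by field_simp
    have hpS : p ∈ S := hball (by simpa [Metric.mem_closedBall, dist_eq_norm] using hpn)
    have hcombo : w = (1 - α) • y + α • p := by
      rw [hp, smul_smul, mul_inv_cancel₀ hα.ne', one_smul]
      abel
    rw [hcombo]
    exact hS hy hpS (by linarith) hα.le (by ring)
  have hball2 : Metric.closedBall x (α * r) ⊆ S := by
    intro w hw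
    exact hmem w (by rwa [Metric.mem_closedBall, dist_eq_norm] at hw)
  -- pointwise estimate
  have hpt : ∀ v ∈ Metric.closedBall (0 : EuclideanSpace ℝ (Fin d)) 1, |c (x + δ • v) - c x| ≤ δ * (2 * C / (α * r)) := by
    intro v hv
    have hv1 : ‖v‖ ≤ 1 := by rwa [Metric.mem_closedBall, dist_zero_right] at hv
    have hmem1 : x + δ • v ∈ Metric.closedBall x (α * r) := by
      rw [Metric.mem_closedBall, dist_eq_norm, add_sub_cancel_left, norm_smul,
        Real.norm_of_nonneg hδ.le]
      nlinarith
    have := pt_lip hαr (hc.subset hball2 (convex_closedBall _ _))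
      (fun z hz => hbdd z (hball2 hz)) hmem1
    rw [add_sub_cancel_left, norm_smul, Real.norm_of_nonneg hδ.le] at this
    calc |c (x + δ • v) - c x| ≤ 2 * C / (α * r) * (δ * ‖v‖) := this
      _ ≤ 2 * C / (α * r) * (δ * 1) := by
          apply mul_le_mul_of_nonneg_left _ (by positivity)
          nlinarith
      _ = δ * (2 * C / (α * r)) := by ring
  set B : Set (EuclideanSpace ℝ (Fin d)) := Metric.closedBall (0 : EuclideanSpace ℝ (Fin d)) 1 with hB
  -- measurability
  have hae : Metric.ball (0 : EuclideanSpace ℝ (Fin d)) 1 =ᵐ[volume] B := by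
    rw [MeasureTheory.ae_eq_set]
    constructor
    · rw [Set.diff_eq_empty.2 Metric.ball_subset_closedBall]; simp
    · refine measure_mono_null ?_ (Measure.addHaar_sphere_of_ne_zero volume (0 : EuclideanSpace ℝ (Fin d)) one_ne_zero)
      rw [hB, Metric.closedBall_diff_ball]
  have hSM : AEStronglyMeasurable (fun v : EuclideanSpace ℝ (Fin d) => c (x + δ • v)) (volume.restrict B) := by
    rw [← Measure.restrict_congr_set hae]
    have hcont : ContinuousOn (fun v : EuclideanSpace ℝ (Fin d) => c (x + δ • v)) (Metric.ball 0 1) := by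
      apply hc.continuousOn_interior.comp
        ((continuous_const.add (continuous_id.const_smul δ)).continuousOn)
      intro v hv
      rw [Metric.mem_ball, dist_zero_right] at hv
      have : x + δ • v ∈ Metric.ball x (α * r) := by
        rw [Metric.mem_ball, dist_eq_norm, add_sub_cancel_left, norm_smul,
          Real.norm_of_nonneg hδ.le]
        nlinarith
      exact interior_maximal (Metric.ball_subset_closedBall.trans hball2)
        Metric.isOpen_ball this
    exact hcont.aestronglyMeasurable measurableSet_ball
  have hbd : ∀ᵐ v ∂(volume.restrict B), ‖c (x + δ • v)‖ ≤ C := by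
    rw [ae_restrict_iff' measurableSet_closedBall]
    apply ae_of_all
    intro v hv
    have hv1 : ‖v‖ ≤ 1 := by rwa [Metric.mem_closedBall, dist_zero_right] at hv
    have : x + δ • v ∈ S := hmem _ (by
      rw [add_sub_cancel_left, norm_smul, Real.norm_of_nonneg hδ.le]; nlinarith)
    simpa [Real.norm_eq_abs] using hbdd _ this
  have hμfin : volume B < ⊤ := measure_closedBall_lt_top
  have hint : IntegrableOn (fun v : EuclideanSpace ℝ (Fin d) => c (x + δ • v)) B := by
    have hconst : IntegrableOn (fun _ : EuclideanSpace ℝ (Fin d) => C) B :=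
      integrableOn_const hμfin.ne
    exact Integrable.mono' hconst hSM hbd
  -- measure facts
  have hμpos : 0 < volume B := Metric.measure_closedBall_pos volume (0 : EuclideanSpace ℝ (Fin d)) one_pos
  set m : ℝ := (volume B).toReal with hm
  have hmpos : 0 < m := ENNReal.toReal_pos hμpos.ne' hμfin.ne
  have hcint : IntegrableOn (fun _ : EuclideanSpace ℝ (Fin d) => c x) B := by
    exact integrableOn_const hμfin.ne
  have hIsub : ∫ v in B, (c (x + δ • v) - c x) = (∫ v in B, c (x + δ • v)) - m * c x := by
    rw [integral_sub hint hcint, setIntegral_const, smul_eq_mul]; rfl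
  have hIbound : ‖∫ v in B, (c (x + δ • v) - c x)‖ ≤ δ * (2 * C / (α * r)) * m := by
    apply norm_setIntegral_le_of_norm_le_const hμfin
    intro v hv
    rw [Real.norm_eq_abs]
    exact hpt v hv
  have havg : (⨍ v in B, c (x + δ • v)) = m⁻¹ * ∫ v in B, c (x + δ • v) := by
    rw [setAverage_eq, smul_eq_mul]; rfl
  have hkey : (⨍ v in B, c (x + δ • v)) - c x
      = m⁻¹ * (∫ v in B, (c (x + δ • v) - c x)) := by
    rw [havg, hIsub]
    field_simp
  rw [hkey, abs_mul, abs_inv, abs_of_pos hmpos]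
  rw [Real.norm_eq_abs] at hIbound
  calc m⁻¹ * |∫ v in B, (c (x + δ • v) - c x)| ≤ m⁻¹ * (δ * (2 * C / (α * r)) * m) := by
        apply mul_le_mul_of_nonneg_left hIbound (by positivity)
    _ = δ * (2 * C / (α * r)) := by field_simp
end

section
/- Let T : ℝ^d → ℝ^d be an invertible affine map, S ⊆ ℝ^d convex with S ⊆ R𝔹 and 𝔹 ⊆ T(S). Then for all u_1, u_2 ∈ T(S), ‖T^{-1}(u_1) − T^{-1}(u_2)‖ ≤ R·‖u_1 − u_2‖. -/
/-- If `S ⊆ R𝔹` and the unit ball is contained in `T(S)` for an invertible affine map `T`,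
then `T⁻¹` is `R`-Lipschitz on `T(S)`. -/
theorem stmt_15 {d : ℕ} (T : EuclideanSpace ℝ (Fin d) ≃ᵃ[ℝ] EuclideanSpace ℝ (Fin d))
    (S : Set (EuclideanSpace ℝ (Fin d))) (hS : Convex ℝ S)
    (R : ℝ) (hR : 0 < R) (hSR : S ⊆ Metric.closedBall (0 : EuclideanSpace ℝ (Fin d)) R)
    (hball : Metric.closedBall (0 : EuclideanSpace ℝ (Fin d)) 1 ⊆ T '' S) :
    ∀ u₁ ∈ T '' S, ∀ u₂ ∈ T '' S, ‖T.symm u₁ - T.symm u₂‖ ≤ R * ‖u₁ - u₂‖ := by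
  have hlin : ∀ p q : EuclideanSpace ℝ (Fin d), T.linear (p - q) = T p - T q := by
    intro p q
    simpa [vsub_eq_sub] using T.toAffineMap.linearMap_vsub p q
  rintro u₁ ⟨x₁, hx₁, rfl⟩ u₂ ⟨x₂, hx₂, rfl⟩
  simp only [AffineEquiv.symm_apply_apply]
  rcases eq_or_ne x₁ x₂ with rfl | hne
  · simp
  have hTne : T x₁ - T x₂ ≠ 0 := by
    simp [sub_ne_zero, T.injective.ne_iff, hne]
  set c := ‖T x₁ - T x₂‖ with hc
  have hc0 : 0 < c := norm_pos_iff.mpr hTne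
  set v := c⁻¹ • (T x₁ - T x₂) with hvdef
  have hv : ‖v‖ = 1 := by
    simp [hvdef, norm_smul, abs_of_pos hc0, inv_mul_cancel₀ hc0.ne', ← hc]
  obtain ⟨a, ha, hTa⟩ := hball (show v ∈ Metric.closedBall 0 1 by simp [hv])
  obtain ⟨b, hb, hTb⟩ := hball (show -v ∈ Metric.closedBall 0 1 by simp [hv])
  have key : a - b = (2 * c⁻¹) • (x₁ - x₂) := by
    apply T.linear.injective
    rw [hlin, hTa, hTb, map_smul, hlin]
    rw [hvdef]
    module
  have hab : ‖a - b‖ = 2 * c⁻¹ * ‖x₁ - x₂‖ := by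
    rw [key, norm_smul]
    have : (0:ℝ) ≤ 2 * c⁻¹ := by positivity
    rw [Real.norm_eq_abs, abs_of_nonneg this]
  have hna : ‖a‖ ≤ R := by simpa [Metric.mem_closedBall, dist_zero_right] using hSR ha
  have hnb : ‖b‖ ≤ R := by simpa [Metric.mem_closedBall, dist_zero_right] using hSR hb
  have h2R : ‖a - b‖ ≤ 2 * R := by
    calc ‖a - b‖ ≤ ‖a‖ + ‖b‖ := norm_sub_le a b
    _ ≤ 2 * R := by linarith
  rw [hab] at h2R
  have hcc : c⁻¹ * ‖x₁ - x₂‖ ≤ R := by linarith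
  calc ‖x₁ - x₂‖ = c * (c⁻¹ * ‖x₁ - x₂‖) := by field_simp
  _ ≤ c * R := by nlinarith
  _ = R * c := mul_comm _ _
end

section
/- Let S ⊆ ℝ^d be convex with r𝔹 ⊆ S, 0 < δ ≤ αr with α < 1, c : S → [−C,C] convex, and ĉ(x) = E_{v∈𝔹}[c(x+δv)] for x ∈ (1−α)S. Then for y ∈ (1−α)S and any unit vector u, with x = y + δu, |ĉ(y) − c(x)| ≤ 2δ·(2C/(αr)). -/
open Pointwise MeasureTheory

set_option maxHeartbeats 1000000

/-- For `y ∈ (1-α)S` and a unit vector `u`, with `x = y + δu`, the smoothed value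
`ĉ(y)` is within `2δ·(2C/(αr))` of `c(x)`. -/
theorem stmt_18 {d : ℕ} (hd : 0 < d) (S : Set (EuclideanSpace ℝ (Fin d))) (hS : Convex ℝ S)
    (r : ℝ) (hr : 0 < r)
    (hball : Metric.closedBall (0 : EuclideanSpace ℝ (Fin d)) r ⊆ S)
    (C : ℝ) (c : EuclideanSpace ℝ (Fin d) → ℝ) (hc : ConvexOn ℝ S c)
    (hbdd : ∀ z ∈ S, |c z| ≤ C)
    (α : ℝ) (hα : 0 < α) (hα1 : α < 1)
    (δ : ℝ) (hδ : 0 < δ) (hδα : δ ≤ α * r)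
    (y : EuclideanSpace ℝ (Fin d)) (hy : y ∈ (1 - α) • S)
    (u : EuclideanSpace ℝ (Fin d)) (hu : ‖u‖ = 1) :
    |(⨍ v in Metric.closedBall (0 : EuclideanSpace ℝ (Fin d)) 1, c (y + δ • v)) -
        c (y + δ • u)| ≤ 2 * δ * (2 * C / (α * r)) := by
  classical
  set B : Set (EuclideanSpace ℝ (Fin d)) := Metric.closedBall (0 : EuclideanSpace ℝ (Fin d)) 1 with hBdef
  set L : ℝ := 2 * C / (α * r) with hLdef
  have hαr : 0 < α * r := mul_pos hα hr
  have h0S : (0 : EuclideanSpace ℝ (Fin d)) ∈ S := hball (Metric.mem_closedBall_self hr.le)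
  have hC0 : 0 ≤ C := (abs_nonneg _).trans (hbdd 0 h0S)
  have hL0 : 0 ≤ L := by positivity
  -- every point within distance α r of y lies in S
  have hyS : ∀ z : EuclideanSpace ℝ (Fin d), ‖z‖ ≤ α * r → y + z ∈ S := by
    intro z hz
    obtain ⟨s₀, hs₀, rfl⟩ := hy
    have hmem : α⁻¹ • z ∈ S := by
      apply hball
      simp only [Metric.mem_closedBall, dist_zero_right, norm_smul, Real.norm_eq_abs,
        abs_of_pos (inv_pos.2 hα)]
      nlinarith [mul_le_mul_of_nonneg_left hz (inv_pos.2 hα).le,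
        mul_inv_cancel₀ hα.ne']
    have h := hS hs₀ hmem (show (0:ℝ) ≤ 1 - α by linarith) hα.le (by ring)
    have hz' : α • (α⁻¹ • z) = z := by
      rw [smul_smul, mul_inv_cancel₀ hα.ne', one_smul]
    rw [hz'] at h
    simpa using h
  have hy0S : y ∈ S := by
    have := hyS 0 (by simp [hαr.le])
    simpa using this
  -- key pointwise Lipschitz-type estimate
  have key : ∀ v : EuclideanSpace ℝ (Fin d), ‖v‖ ≤ 1 → |c (y + δ • v) - c y| ≤ δ * L := by
    intro v hv
    rcases eq_or_ne v 0 with rfl | hv0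
    · simp only [smul_zero, add_zero, sub_self, abs_zero]
      positivity
    have hn : 0 < ‖v‖ := norm_pos_iff.2 hv0
    set w : EuclideanSpace ℝ (Fin d) := ((α * r) / ‖v‖) • v with hwdef
    have hwnorm : ‖w‖ = α * r := by
      rw [hwdef, norm_smul, Real.norm_eq_abs, abs_of_pos (by positivity)]
      field_simp
    have hq'S : y + w ∈ S := hyS w hwnorm.le
    have hp'S : y + (-w) ∈ S := hyS _ (by rw [norm_neg, hwnorm])
    have hqnorm : ‖δ • v‖ ≤ α * r := by
      rw [norm_smul, Real.norm_eq_abs, abs_of_pos hδ]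
      nlinarith
    have hqS : y + δ • v ∈ S := hyS _ hqnorm
    set s : ℝ := δ * ‖v‖ with hsdef
    have hs0 : 0 < s := mul_pos hδ hn
    have hsle : s ≤ α * r := by nlinarith
    set lam : ℝ := s / (α * r) with hlamdef
    have hlam0 : 0 ≤ lam := by positivity
    have hlam1 : lam ≤ 1 := (div_le_one hαr).2 hsle
    have hlamw : lam • w = δ • v := by
      rw [hwdef, smul_smul, hlamdef, hsdef]
      congr 1
      field_simp
    have hcy := abs_le.1 (hbdd y hy0S)
    have hcq := abs_le.1 (hbdd _ hqS)
    have hcq' := abs_le.1 (hbdd _ hq'S)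
    have hcp' := abs_le.1 (hbdd _ hp'S)
    -- upper bound
    have hup : c (y + δ • v) - c y ≤ lam * (2 * C) := by
      have h2 := hc.2 hy0S hq'S (show (0:ℝ) ≤ 1 - lam by linarith) hlam0 (by ring)
      have hcomb : (1 - lam) • y + lam • (y + w) = y + δ • v := by
        rw [← hlamw]; module
      rw [hcomb] at h2
      simp only [smul_eq_mul] at h2
      nlinarith [mul_nonneg hlam0 (by linarith : (0:ℝ) ≤ 2 * C - c (y + w) + c y)]
    -- lower bound
    have hlo : c y - c (y + δ • v) ≤ lam * (2 * C) := by
      set mu : ℝ := (α * r) / (s + α * r) with hmudef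
      have hsum : 0 < s + α * r := by linarith
      have hmu0 : 0 ≤ mu := by positivity
      have hmu1 : mu ≤ 1 := (div_le_one hsum).2 (by linarith)
      have h3 := hc.2 hqS hp'S hmu0 (show (0:ℝ) ≤ 1 - mu by linarith) (by ring)
      have hcomb : mu • (y + δ • v) + (1 - mu) • (y + (-w)) = y := by
        rw [← hlamw]
        match_scalars
        · ring
        · rw [hmudef, hlamdef]
          field_simp
          ring
      rw [hcomb] at h3
      simp only [smul_eq_mul] at h3
      have hmule : 1 - mu ≤ lam := by
        have h1m : 1 - mu = s / (s + α * r) := by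
          rw [hmudef]; field_simp; ring
        rw [h1m, hlamdef]
        exact div_le_div_of_nonneg_left hs0.le hαr (by linarith)
      nlinarith [mul_nonneg (by linarith : (0:ℝ) ≤ 1 - mu)
        (by linarith : (0:ℝ) ≤ 2 * C - c (y + -w) + c (y + δ • v)),
        mul_le_mul_of_nonneg_right hmule (by linarith : (0:ℝ) ≤ 2 * C)]
    have h4 : lam * (2 * C) ≤ δ * L := by
      have hv' : δ * ‖v‖ ≤ δ := by nlinarith
      have heq : lam * (2 * C) = (δ * ‖v‖) * (2 * C / (α * r)) := by
        rw [hlamdef, hsdef]; field_simp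
      rw [heq, hLdef]
      exact mul_le_mul_of_nonneg_right hv' (by positivity)
    exact abs_sub_le_iff.2 ⟨hup.trans h4, hlo.trans h4⟩
  -- membership and bound on the ball
  have hkeyB : ∀ v ∈ B, |c (y + δ • v) - c y| ≤ δ * L := by
    intro v hvB
    exact key v (by simpa [hBdef, Metric.mem_closedBall, dist_zero_right] using hvB)
  -- measure facts
  have hμB : volume B < ⊤ := measure_closedBall_lt_top
  have hμB0 : volume B ≠ 0 := by
    apply (Metric.measure_closedBall_pos volume (0 : EuclideanSpace ℝ (Fin d)) one_pos).ne'
  set m : ℝ := (volume B).toReal with hmdef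
  have hm0 : 0 < m := ENNReal.toReal_pos hμB0 hμB.ne
  -- integrability
  set f : EuclideanSpace ℝ (Fin d) → ℝ := fun v => c (y + δ • v) with hfdef
  have haeball : Metric.ball (0 : EuclideanSpace ℝ (Fin d)) 1 =ᵐ[volume] B := by
    have hsph : volume (Metric.sphere (0 : EuclideanSpace ℝ (Fin d)) 1) = 0 :=
      Measure.addHaar_sphere_of_ne_zero (μ := volume) (0 : EuclideanSpace ℝ (Fin d)) one_ne_zero
    refine MeasureTheory.ae_eq_set.2 ⟨?_, ?_⟩
    · rw [Set.diff_eq_empty.2 Metric.ball_subset_closedBall]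
      simp
    · exact measure_mono_null (by
        intro x hx
        simp only [Set.mem_diff, hBdef, Metric.mem_closedBall, Metric.mem_ball,
          Metric.mem_sphere] at *
        exact le_antisymm hx.1 (not_lt.1 hx.2)) hsph
  have hcont : ContinuousOn f (Metric.ball (0 : EuclideanSpace ℝ (Fin d)) 1) := by
    have hmaps : Set.MapsTo (fun v : EuclideanSpace ℝ (Fin d) => y + δ • v) (Metric.ball (0 : EuclideanSpace ℝ (Fin d)) 1) (interior S) := by
      intro v hv
      rw [Metric.mem_ball, dist_zero_right] at hv
      have hsub : Metric.ball y (α * r) ⊆ S := by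
        intro z hz
        have : z = y + (z - y) := by abel
        rw [this]
        exact hyS _ (le_of_lt (by simpa [dist_eq_norm] using hz))
      have : y + δ • v ∈ Metric.ball y (α * r) := by
        rw [Metric.mem_ball, dist_eq_norm]
        have : ‖y + δ • v - y‖ = δ * ‖v‖ := by
          rw [add_sub_cancel_left, norm_smul, Real.norm_eq_abs, abs_of_pos hδ]
        rw [this]
        nlinarith
      exact interior_maximal hsub Metric.isOpen_ball this
    exact hc.continuousOn_interior.comp
      (Continuous.continuousOn (continuous_const.add (continuous_id.const_smul δ))) hmaps
  have hintball : IntegrableOn f (Metric.ball (0 : EuclideanSpace ℝ (Fin d)) 1) volume := by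
    have : IsFiniteMeasure (volume.restrict (Metric.ball (0 : EuclideanSpace ℝ (Fin d)) 1)) :=
      ⟨by rw [Measure.restrict_apply_univ]; exact measure_ball_lt_top⟩
    refine ⟨hcont.aestronglyMeasurable measurableSet_ball, ?_⟩
    apply MeasureTheory.HasFiniteIntegral.of_bounded (C := C)
    filter_upwards [MeasureTheory.ae_restrict_mem measurableSet_ball] with v hv
    rw [Metric.mem_ball, dist_zero_right] at hv
    have : y + δ • v ∈ S := by
      apply hyS
      rw [norm_smul, Real.norm_eq_abs, abs_of_pos hδ]
      nlinarith
    simpa [hfdef, Real.norm_eq_abs] using hbdd _ this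
  have hint : IntegrableOn f B volume := by
    have hre : volume.restrict (Metric.ball (0 : EuclideanSpace ℝ (Fin d)) 1) = volume.restrict B :=
      Measure.restrict_congr_set haeball
    unfold IntegrableOn
    rw [← hre]
    exact hintball
  -- bound the integral of f - c y
  have hintsub : IntegrableOn (fun v => f v - c y) B volume :=
    hint.sub (integrableOn_const hμB.ne)
  have hIbound : |∫ v in B, (f v - c y) ∂volume| ≤ δ * L * m := by
    have := MeasureTheory.norm_setIntegral_le_of_norm_le_const_ae' (C := δ * L)
      (f := fun v => f v - c y) (μ := volume) (s := B) hμB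
      (Filter.Eventually.of_forall (fun v hv => by
        simpa [Real.norm_eq_abs] using hkeyB v hv))
    simpa [Real.norm_eq_abs, hmdef, measureReal_def] using this
  have hintconst : ∫ v in B, (c y) ∂volume = m * c y := by
    rw [MeasureTheory.setIntegral_const, hmdef, smul_eq_mul, measureReal_def]
  have havg : (⨍ v in B, f v ∂volume) - c y = m⁻¹ * ∫ v in B, (f v - c y) ∂volume := by
    rw [MeasureTheory.integral_sub hint (integrableOn_const hμB.ne), hintconst,
      MeasureTheory.setAverage_eq, smul_eq_mul, measureReal_def, ← hmdef]
    field_simp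
  have h1 : |(⨍ v in B, f v ∂volume) - c y| ≤ δ * L := by
    rw [havg, abs_mul, abs_of_pos (inv_pos.2 hm0)]
    calc m⁻¹ * |∫ v in B, (f v - c y) ∂volume| ≤ m⁻¹ * (δ * L * m) := by
          exact mul_le_mul_of_nonneg_left hIbound (inv_pos.2 hm0).le
      _ = δ * L := by field_simp
  have h2 : |c y - c (y + δ • u)| ≤ δ * L := by
    rw [abs_sub_comm]
    exact key u hu.le
  calc |(⨍ v in B, f v ∂volume) - c (y + δ • u)|
      ≤ |(⨍ v in B, f v ∂volume) - c y| + |c y - c (y + δ • u)| := abs_sub_le _ _ _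
    _ ≤ δ * L + δ * L := add_le_add h1 h2
    _ = 2 * δ * L := by ring
end
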